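/- Since α > 2, the integral ∫₀^∞ C_DL(2^x − 1) dx is finite, where C_DL is viewed as a function of the SIR threshold with all other parameters fixed. (Hence the mean downlink Shannon rate of the typical user, and therefore the effective data rate T = λ_b ∫₀^∞ C_DL(2^x − 1) dx / (ν λ_u P_DL) of Theorem 4, is finite.) -/

import Mathlib

open MeasureTheory Real Set Filter

noncomputable def A (rho mu : ℝ) : ℝ :=
  ∫ u in (0:ℝ)..rho, (1 - Real.exp (-2 * mu * Real.sqrt (rho ^ 2 - u ^ 2)))

noncomputable def P_SL (lamL mu rho : ℝ) : ℝ := 1 - Real.exp (-2 * lamL * A rho mu)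

noncomputable def P_DL (lamL mu rho : ℝ) : ℝ := Real.exp (-2 * lamL * A rho mu)

noncomputable def K1 (tau alpha x : ℝ) : ℝ :=
  x ^ 2 + 2 * ∫ r in Set.Ioi x,
    tau * x ^ alpha * r ^ (1 - alpha) / (1 + tau * x ^ alpha * r ^ (-alpha))

noncomputable def K2 (mu rho alpha eta tau x : ℝ) : ℝ :=
  ∫ r in (0:ℝ)..rho,
    (1 - Real.exp (-2 * mu * Real.sqrt (rho ^ 2 - r ^ 2)
      - 2 * mu * ∫ u in Set.Ioi (Real.sqrt (rho ^ 2 - r ^ 2)),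
          tau * x ^ alpha * eta * (r ^ 2 + u ^ 2) ^ (-(alpha / 2)) /
            (1 + tau * x ^ alpha * eta * (r ^ 2 + u ^ 2) ^ (-(alpha / 2)))))

noncomputable def K3 (mu rho alpha eta tau x : ℝ) : ℝ :=
  ∫ r in Set.Ioi rho,
    (1 - Real.exp (-2 * mu * ∫ u in Set.Ioi (0:ℝ),
        tau * x ^ alpha * eta * (r ^ 2 + u ^ 2) ^ (-(alpha / 2)) /
          (1 + tau * x ^ alpha * eta * (r ^ 2 + u ^ 2) ^ (-(alpha / 2)))))

noncomputable def C_DL (lamB lamL mu rho alpha eta tau : ℝ) : ℝ :=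
  ∫ x in Set.Ioi (0:ℝ),
    2 * Real.pi * lamB * x *
      Real.exp (-(Real.pi * lamB * K1 tau alpha x) - 2 * lamL * K2 mu rho alpha eta tau x
        - 2 * lamL * K3 mu rho alpha eta tau x)

/-!
Discarding the nonnegative terms `K2`, `K3` and using `K1 τ α x ≥ (1 + τ ^ (2/α)) / 2 * x ^ 2`
(for `x < r ≤ τ ^ (1/α) * x` the `K1`-integrand is at least `r / 2`) dominates the integrand of
`C_DL` by a multiple of `x * exp (-c * x ^ 2)`, whence `C_DL τ ≤ 2 / (1 + τ ^ (2/α))`. Since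
`2 / α ≤ 1`, subadditivity of `t ↦ t ^ (2/α)` turns this into `C_DL τ ≤ 2 * (1 + τ) ^ (-(2/α))`,
which at `τ = 2 ^ x - 1` is the exponentially decaying `2 * 2 ^ (-2x/α)`.
-/

theorem integral_Ioi_mul_exp_neg_mul_sq {b : ℝ} (hb : 0 < b) :
    ∫ r in Ioi (0:ℝ), r * exp (-b * r ^ 2) = (2 * b)⁻¹ := by
  apply Complex.ofReal_injective
  rw [← integral_complex_ofReal]
  push_cast
  exact integral_mul_cexp_neg_mul_sq (by simpa using hb)

section ParametricIntegral

variable {α : Type*} [MeasurableSpace α] {f : α → ℝ → ℝ}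

@[fun_prop]
theorem measurable_setIntegral_Ioi (hf : Measurable (Function.uncurry f)) {b : α → ℝ}
    (hb : Measurable b) : Measurable fun a => ∫ r in Ioi (b a), f a r := by
  have hS : MeasurableSet {p : α × ℝ | b p.1 < p.2} :=
    measurableSet_lt (hb.comp measurable_fst) measurable_snd
  convert (hf.indicator hS).stronglyMeasurable.integral_prod_right' (ν := volume) |>.measurable
    using 2 with a
  rw [← integral_indicator measurableSet_Ioi]
  rfl

@[fun_prop]
theorem measurable_intervalIntegral (hf : Measurable (Function.uncurry f)) (c d : ℝ) :
    Measurable fun a => ∫ r in c..d, f a r := by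
  have h (s : Set ℝ) : Measurable fun a => ∫ r in s, f a r :=
    (hf.stronglyMeasurable.integral_prod_right (ν := volume.restrict s)).measurable
  simp only [intervalIntegral]
  exact (h _).sub (h _)

end ParametricIntegral

theorem measurable_C_DL (lamB lamL mu rho alpha eta : ℝ) :
    Measurable (C_DL lamB lamL mu rho alpha eta) := by
  unfold C_DL K1 K2 K3
  fun_prop

section K1Bound

variable {tau alpha x : ℝ}

theorem K1_integrand_ge_half (htau : 0 < tau) (halpha : 0 < alpha) (hx : 0 < x) {r : ℝ}
    (hr : r ∈ Ioc x (tau ^ alpha⁻¹ * x)) :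
    r / 2 ≤ tau * x ^ alpha * r ^ (1 - alpha) / (1 + tau * x ^ alpha * r ^ (-alpha)) := by
  have hr0 : 0 < r := hx.trans hr.1
  have hrα : 0 < r ^ alpha := rpow_pos_of_pos hr0 alpha
  have hrα_le : r ^ alpha ≤ tau * x ^ alpha := by
    calc r ^ alpha ≤ (tau ^ alpha⁻¹ * x) ^ alpha := rpow_le_rpow hr0.le hr.2 halpha.le
      _ = tau * x ^ alpha := by
        rw [mul_rpow (by positivity) hx.le, rpow_inv_rpow htau.le halpha.ne']
  have hform : tau * x ^ alpha * r ^ (1 - alpha) / (1 + tau * x ^ alpha * r ^ (-alpha))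
      = r * (tau * x ^ alpha) / (r ^ alpha + tau * x ^ alpha) := by
    rw [rpow_sub hr0, rpow_one, rpow_neg hr0.le]
    field_simp
  rw [hform, div_le_div_iff₀ two_pos (by positivity)]
  nlinarith

theorem K1_integrand_nonneg (htau : 0 ≤ tau) (hx : 0 ≤ x) {r : ℝ} (hr : x < r) :
    0 ≤ tau * x ^ alpha * r ^ (1 - alpha) / (1 + tau * x ^ alpha * r ^ (-alpha)) := by
  have hr0 : 0 < r := hx.trans_lt hr
  positivity

theorem integrableOn_K1_integrand (htau : 0 ≤ tau) (halpha : 2 < alpha) (hx : 0 < x) :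
    IntegrableOn (fun r => tau * x ^ alpha * r ^ (1 - alpha) /
      (1 + tau * x ^ alpha * r ^ (-alpha))) (Ioi x) := by
  have hdom := (integrableOn_Ioi_rpow_of_lt (a := 1 - alpha) (by linarith) hx).const_mul
    (tau * x ^ alpha)
  refine hdom.mono' (by fun_prop : Measurable _).aestronglyMeasurable ?_
  filter_upwards [ae_restrict_mem measurableSet_Ioi] with r hr
  have hr0 : 0 < r := hx.trans hr
  rw [norm_of_nonneg (K1_integrand_nonneg htau hx.le hr)]
  exact div_le_self (by positivity) (le_add_of_nonneg_right (by positivity))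

theorem sq_le_K1 (htau : 0 ≤ tau) (hx : 0 ≤ x) : x ^ 2 ≤ K1 tau alpha x := by
  have := setIntegral_nonneg (μ := volume) measurableSet_Ioi fun r (hr : x < r) ↦
    K1_integrand_nonneg (alpha := alpha) htau hx hr
  rw [K1]
  linarith

theorem mul_sq_le_K1_of_one_le (htau : 1 ≤ tau) (halpha : 2 < alpha) (hx : 0 < x) :
    (1 + tau ^ (2 / alpha)) / 2 * x ^ 2 ≤ K1 tau alpha x := by
  have htau0 : 0 < tau := one_pos.trans_le htau
  have halpha0 : 0 < alpha := by linarith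
  set s := tau ^ alpha⁻¹
  have hxs : x ≤ s * x := le_mul_of_one_le_left hx.le (one_le_rpow htau (by positivity))
  have hs2 : s ^ 2 = tau ^ (2 / alpha) := by
    rw [← rpow_natCast, ← rpow_mul htau0.le]
    ring_nf
  have hint := integrableOn_K1_integrand htau0.le halpha hx
  have hIoc : ((s * x) ^ 2 - x ^ 2) / 4 ≤ ∫ r in Ioi x,
      tau * x ^ alpha * r ^ (1 - alpha) / (1 + tau * x ^ alpha * r ^ (-alpha)) :=
    calc ((s * x) ^ 2 - x ^ 2) / 4 = ∫ r in Ioc x (s * x), r / 2 := by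
          rw [← intervalIntegral.integral_of_le hxs, intervalIntegral.integral_div, integral_id]
          ring
      _ ≤ ∫ r in Ioc x (s * x),
          tau * x ^ alpha * r ^ (1 - alpha) / (1 + tau * x ^ alpha * r ^ (-alpha)) :=
        setIntegral_mono_on (Continuous.integrableOn_Ioc (by fun_prop))
          (hint.mono_set Ioc_subset_Ioi_self) measurableSet_Ioc
          fun r hr ↦ K1_integrand_ge_half htau0 halpha0 hx hr
      _ ≤ _ := setIntegral_mono_set hint
          (ae_restrict_of_forall_mem measurableSet_Ioi fun r hr ↦
            K1_integrand_nonneg htau0.le hx.le hr)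
          Ioc_subset_Ioi_self.eventuallyLE
  rw [K1, ← hs2]
  nlinarith

theorem mul_sq_le_K1 (htau : 0 ≤ tau) (halpha : 2 < alpha) (hx : 0 < x) :
    (1 + tau ^ (2 / alpha)) / 2 * x ^ 2 ≤ K1 tau alpha x := by
  rcases le_total tau 1 with htau1 | htau1
  · have : tau ^ (2 / alpha) ≤ 1 := rpow_le_one htau htau1 (by positivity)
    nlinarith [sq_le_K1 (alpha := alpha) htau hx.le]
  · exact mul_sq_le_K1_of_one_le htau1 halpha hx

end K1Bound

section CoverageBound

variable {lamB lamL mu rho alpha eta tau : ℝ}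

theorem K2_nonneg (hmu : 0 ≤ mu) (hrho : 0 ≤ rho) (heta : 0 ≤ eta) (htau : 0 ≤ tau) {x : ℝ}
    (hx : 0 ≤ x) : 0 ≤ K2 mu rho alpha eta tau x := by
  refine intervalIntegral.integral_nonneg hrho fun r _ ↦ sub_nonneg.2 (exp_le_one_iff.2 ?_)
  have : 0 ≤ ∫ u in Ioi √(rho ^ 2 - r ^ 2),
      tau * x ^ alpha * eta * (r ^ 2 + u ^ 2) ^ (-(alpha / 2)) /
        (1 + tau * x ^ alpha * eta * (r ^ 2 + u ^ 2) ^ (-(alpha / 2))) := by positivity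
  nlinarith [sqrt_nonneg (rho ^ 2 - r ^ 2)]

theorem K3_nonneg (hmu : 0 ≤ mu) (heta : 0 ≤ eta) (htau : 0 ≤ tau) {x : ℝ} (hx : 0 ≤ x) :
    0 ≤ K3 mu rho alpha eta tau x := by
  refine setIntegral_nonneg measurableSet_Ioi fun r _ ↦ sub_nonneg.2 (exp_le_one_iff.2 ?_)
  have : 0 ≤ ∫ u in Ioi (0 : ℝ),
      tau * x ^ alpha * eta * (r ^ 2 + u ^ 2) ^ (-(alpha / 2)) /
        (1 + tau * x ^ alpha * eta * (r ^ 2 + u ^ 2) ^ (-(alpha / 2))) := by positivity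
  nlinarith

theorem C_DL_nonneg (hlamB : 0 ≤ lamB) : 0 ≤ C_DL lamB lamL mu rho alpha eta tau :=
  setIntegral_nonneg measurableSet_Ioi fun x (hx : 0 < x) ↦ by positivity

theorem C_DL_le_inv (hlamB : 0 < lamB) (hlamL : 0 ≤ lamL) (hmu : 0 ≤ mu) (hrho : 0 ≤ rho)
    (heta : 0 ≤ eta) (htau : 0 ≤ tau) {b : ℝ} (hb : 0 < b)
    (hK1 : ∀ x, 0 < x → b * x ^ 2 ≤ K1 tau alpha x) :
    C_DL lamB lamL mu rho alpha eta tau ≤ b⁻¹ := by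
  have hc : 0 < π * lamB * b := by positivity
  calc C_DL lamB lamL mu rho alpha eta tau
      ≤ ∫ x in Ioi (0 : ℝ), 2 * π * lamB * (x * exp (-(π * lamB * b) * x ^ 2)) := by
        refine integral_mono_of_nonneg
          (ae_restrict_of_forall_mem measurableSet_Ioi fun x (hx : 0 < x) ↦ by positivity)
          ((integrable_mul_exp_neg_mul_sq hc).const_mul _).integrableOn
          (ae_restrict_of_forall_mem measurableSet_Ioi fun x (hx : 0 < x) ↦ ?_)
        have := K2_nonneg (alpha := alpha) hmu hrho heta htau hx.le
        have := K3_nonneg (rho := rho) (alpha := alpha) hmu heta htau hx.le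
        dsimp only
        rw [← mul_assoc]
        gcongr
        nlinarith [mul_le_mul_of_nonneg_left (hK1 x hx) (by positivity : 0 ≤ π * lamB)]
    _ = b⁻¹ := by
        rw [integral_const_mul, integral_Ioi_mul_exp_neg_mul_sq hc]
        field_simp

theorem C_DL_le_two_mul_rpow (hlamB : 0 < lamB) (hlamL : 0 ≤ lamL) (hmu : 0 ≤ mu)
    (hrho : 0 ≤ rho) (halpha : 2 < alpha) (heta : 0 ≤ eta) (htau : 0 ≤ tau) :
    C_DL lamB lamL mu rho alpha eta tau ≤ 2 * (1 + tau) ^ (-(2 / alpha)) := by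
  have hp : 0 < 2 / alpha := by positivity
  have hsub : (1 + tau) ^ (2 / alpha) ≤ 1 + tau ^ (2 / alpha) := by
    simpa using rpow_add_le_add_rpow zero_le_one htau hp.le
      ((div_le_one (by linarith)).2 halpha.le)
  calc C_DL lamB lamL mu rho alpha eta tau ≤ ((1 + tau ^ (2 / alpha)) / 2)⁻¹ :=
        C_DL_le_inv hlamB hlamL hmu hrho heta htau (by positivity)
          fun x hx ↦ mul_sq_le_K1 htau halpha hx
    _ ≤ (((1 + tau) ^ (2 / alpha)) / 2)⁻¹ := by gcongr
    _ = 2 * (1 + tau) ^ (-(2 / alpha)) := by rw [rpow_neg (by positivity)]; field_simp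

theorem C_DL_two_rpow_sub_one_le (hlamB : 0 < lamB) (hlamL : 0 ≤ lamL) (hmu : 0 ≤ mu)
    (hrho : 0 ≤ rho) (halpha : 2 < alpha) (heta : 0 ≤ eta) {x : ℝ} (hx : 0 ≤ x) :
    C_DL lamB lamL mu rho alpha eta (2 ^ x - 1) ≤ 2 * exp (-(2 / alpha * log 2) * x) := by
  have htau : 0 ≤ (2 : ℝ) ^ x - 1 := sub_nonneg.2 (one_le_rpow one_le_two hx)
  calc C_DL lamB lamL mu rho alpha eta (2 ^ x - 1) ≤ 2 * (1 + (2 ^ x - 1)) ^ (-(2 / alpha)) :=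
        C_DL_le_two_mul_rpow hlamB hlamL hmu hrho halpha heta htau
    _ = 2 * exp (-(2 / alpha * log 2) * x) := by
        rw [add_sub_cancel, ← rpow_mul zero_le_two, rpow_def_of_pos two_pos]
        ring_nf

end CoverageBound

theorem mean_rate_integrable (lamB lamL mu rho alpha eta : ℝ) (hlamB : 0 < lamB) (hlamL : 0 < lamL)
    (hmu : 0 < mu) (hrho : 0 < rho) (halpha : 2 < alpha) (heta : 0 < eta) :
    MeasureTheory.IntegrableOn
      (fun x : ℝ => C_DL lamB lamL mu rho alpha eta ((2:ℝ) ^ x - 1)) (Set.Ioi (0:ℝ)) := by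
  have hk : 0 < 2 / alpha * log 2 := mul_pos (by positivity) (log_pos one_lt_two)
  refine Integrable.mono' ((exp_neg_integrableOn_Ioi 0 hk).const_mul 2)
    ((measurable_C_DL lamB lamL mu rho alpha eta).comp (by fun_prop)).aestronglyMeasurable
    (ae_restrict_of_forall_mem measurableSet_Ioi fun x (hx : 0 < x) ↦ ?_)
  rw [norm_of_nonneg (C_DL_nonneg hlamB.le)]
  exact C_DL_two_rpow_sub_one_le hlamB hlamL.le hmu.le hrho.le halpha heta.le hx.le
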